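/- arXiv:1908.01986 — 2 statements merged into one kernel-verified Lean document; each statement's English description precedes it below -/
import Mathlib

section
/- Let d ≥ 1, let Ω ⊆ ℝ^d be a bounded open set equipped with Lebesgue measure, let a ≤ b be real numbers, and let C > 0. Suppose φ_m : [a,b] → L²(Ω), m ∈ ℕ, is a sequence of functions such that (i) for every m ∈ ℕ and every a ≤ s ≤ t ≤ b one has φ_m(s) ≤ φ_m(t) almost everywhere in Ω, and (ii) ‖φ_m(t)‖_{L²(Ω)} ≤ C for every t ∈ [a,b] and every m ∈ ℕ. Then there exist a strictly increasing map σ : ℕ → ℕ and a function φ : [a,b] → L²(Ω) such that for every t ∈ [a,b] the subsequence φ_{σ(m)}(t) converges weakly to φ(t) in L²(Ω) as m → ∞ (that is, ∫_Ω φ_{σ(m)}(t) g dx → ∫_Ω φ(t) g dx for every g ∈ L²(Ω)); moreover ‖φ(t)‖_{L²(Ω)} ≤ C for every t ∈ [a,b], and φ(s) ≤ φ(t) almost everywhere in Ω for every a ≤ s ≤ t ≤ b. -/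
/-!
A bounded sequence in a countable product of intervals has a convergent subsequence, so a
uniformly bounded family of monotone functions `ℝ → ℝ` (countably many of them) can be made to
converge at every rational. The supremum of the rational limits to the left of `t` is monotone
in `t`, hence continuous off a countable set; at its continuity points the sequence converges by
squeezing between rationals, and a second extraction deals with the countably many other points.

In `L²`, test against a countable dense subset of the positive cone: for `h ≥ 0` the maps
`t ↦ ⟪φ m t, h⟫` are monotone, so the scalar argument applies. The uniform norm bound carries
convergence from the dense subset to the whole cone and, through `g = g⁺ - g⁻`, to every `g`.
The limit functional is represented by a vector (Banach–Steinhaus and Riesz), and monotonicity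
passes to the limit because the order of `L²` is detected by pairing with nonnegative functions.
-/

open Filter MeasureTheory Set Topology
open scoped RealInnerProductSpace NNReal ENNReal

theorem exists_subseq_tendsto_of_forall_abs_le {κ : Type*} [Countable κ] (g : ℕ → κ → ℝ)
    (B : κ → ℝ) (hg : ∀ m k, |g m k| ≤ B k) :
    ∃ σ : ℕ → ℕ, StrictMono σ ∧ ∀ k, ∃ l, Tendsto (fun m => g (σ m) k) atTop (𝓝 l) := by
  have hK : IsCompact (univ.pi fun k => Icc (-B k) (B k)) :=
    isCompact_univ_pi fun _ => isCompact_Icc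
  obtain ⟨l, -, σ, hσ, hl⟩ := hK.tendsto_subseq (x := g) fun m =>
    mem_univ_pi.2 fun k => abs_le.1 (hg m k)
  exact ⟨σ, hσ, fun k => ⟨l k, tendsto_pi_nhds.1 hl k⟩⟩

noncomputable def leftSupRat (L : ℚ → ℝ) (t : ℝ) : ℝ :=
  ⨆ q : {q : ℚ // (q : ℝ) < t}, L q

section leftSupRat

variable {L : ℚ → ℝ}

instance (t : ℝ) : Nonempty {q : ℚ // (q : ℝ) < t} :=
  let ⟨q, hq⟩ := exists_rat_lt t; ⟨⟨q, hq⟩⟩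

theorem le_leftSupRat (hL : BddAbove (range L)) {q : ℚ} {t : ℝ} (hqt : (q : ℝ) < t) :
    L q ≤ leftSupRat L t :=
  le_ciSup (f := fun q : {q : ℚ // (q : ℝ) < t} => L q) (hL.mono (range_comp_subset_range _ _))
    ⟨q, hqt⟩

theorem monotone_leftSupRat (hL : BddAbove (range L)) : Monotone (leftSupRat L) :=
  fun _ _ hst => ciSup_le fun q => le_leftSupRat hL (q.2.trans_le hst)

theorem tendsto_leftSupRat_of_continuousAt {u : ℕ → ℝ → ℝ} (hu : ∀ m, Monotone (u m))
    (hL : BddAbove (range L)) (huL : ∀ q : ℚ, Tendsto (fun m => u m q) atTop (𝓝 (L q)))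
    {t : ℝ} (ht : ContinuousAt (leftSupRat L) t) :
    Tendsto (fun m => u m t) atTop (𝓝 (leftSupRat L t)) := by
  refine tendsto_order.2 ⟨fun c hc => ?_, fun c hc => ?_⟩
  · obtain ⟨q, hq⟩ := exists_lt_of_lt_ciSup hc
    filter_upwards [(huL q).eventually (lt_mem_nhds hq)] with m hm
    exact hm.trans_le (hu m q.2.le)
  · have : ∀ᶠ s in 𝓝[>] t, leftSupRat L s < c ∧ t < s :=
      ((ht.eventually (gt_mem_nhds hc)).filter_mono nhdsWithin_le_nhds).and self_mem_nhdsWithin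
    obtain ⟨s, hs, hts⟩ := this.exists
    obtain ⟨q, htq, hqs⟩ := exists_rat_btwn hts
    have hLq : L q < c := (le_leftSupRat hL hqs).trans_lt hs
    filter_upwards [(huL q).eventually (gt_mem_nhds hLq)] with m hm
    exact (hu m htq.le).trans_lt hm

end leftSupRat

theorem exists_subseq_tendsto_of_monotone {ι : Type*} [Countable ι] (f : ℕ → ι → ℝ → ℝ)
    (hf : ∀ m i, Monotone (f m i)) (B : ι → ℝ) (hB : ∀ m i t, |f m i t| ≤ B i) :
    ∃ σ : ℕ → ℕ, StrictMono σ ∧ ∀ i t, ∃ l, Tendsto (fun m => f (σ m) i t) atTop (𝓝 l) := by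
  obtain ⟨σ₁, hσ₁, hconv₁⟩ := exists_subseq_tendsto_of_forall_abs_le
    (fun m (p : ι × ℚ) => f m p.1 p.2) (fun p => B p.1) fun m p => hB m p.1 p.2
  choose L hL using hconv₁
  have hLbdd : ∀ i, BddAbove (range fun q : ℚ => L (i, q)) := fun i =>
    ⟨B i, forall_mem_range.2 fun q =>
      le_of_tendsto' (hL (i, q)) fun m => (abs_le.1 (hB _ i q)).2⟩
  set F : ι → ℝ → ℝ := fun i => leftSupRat fun q => L (i, q)
  have : ∀ i, Countable {t | ¬ContinuousAt (F i) t} := fun i =>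
    (monotone_leftSupRat (hLbdd i)).countable_not_continuousAt.to_subtype
  obtain ⟨σ₂, hσ₂, hconv₂⟩ := exists_subseq_tendsto_of_forall_abs_le
    (fun m (p : Σ i, {t | ¬ContinuousAt (F i) t}) => f (σ₁ m) p.1 p.2) (fun p => B p.1)
    fun m p => hB _ p.1 p.2
  refine ⟨σ₁ ∘ σ₂, hσ₁.comp hσ₂, fun i t => ?_⟩
  by_cases ht : ContinuousAt (F i) t
  · exact ⟨_, (tendsto_leftSupRat_of_continuousAt (fun m => hf (σ₁ m) i) (hLbdd i)
      (fun q => hL (i, q)) ht).comp hσ₂.tendsto_atTop⟩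
  · exact hconv₂ ⟨i, t, ht⟩

theorem isClosed_setOf_cauchySeq_of_lipschitzWith {X Y : Type*} [PseudoMetricSpace X]
    [PseudoMetricSpace Y] {F : ℕ → X → Y} {K : ℝ≥0} (hF : ∀ m, LipschitzWith K (F m)) :
    IsClosed {x | CauchySeq fun m => F m x} := by
  refine isClosed_of_closure_subset fun x hx => Metric.cauchySeq_iff'.2 fun ε hε => ?_
  obtain ⟨y, hy, hxy⟩ := Metric.mem_closure_iff.1 hx (ε / 3 / (K + 1)) (by positivity)
  obtain ⟨N, hN⟩ := Metric.cauchySeq_iff'.1 hy (ε / 3) (by positivity)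
  have hclose : ∀ m, dist (F m x) (F m y) < ε / 3 := fun m => calc
    dist (F m x) (F m y) ≤ K * dist x y := (hF m).dist_le_mul x y
    _ ≤ (K + 1) * dist x y := by gcongr; linarith
    _ < ε / 3 := by rwa [← lt_div_iff₀' (by positivity)]
  refine ⟨N, fun n hn => ?_⟩
  calc dist (F n x) (F N x)
        ≤ dist (F n x) (F n y) + dist (F n y) (F N y) + dist (F N y) (F N x) :=
        dist_triangle4 _ _ _ _
    _ < ε / 3 + ε / 3 + ε / 3 := by
        gcongr
        · exact hclose n
        · exact hN n hn
        · rw [dist_comm]; exact hclose N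
    _ = ε := by ring

section InnerProductSpace

variable {E : Type*}

theorem isClosed_setOf_cauchySeq_inner [SeminormedAddCommGroup E] [InnerProductSpace ℝ E]
    {x : ℕ → E} {C : ℝ} (hx : ∀ m, ‖x m‖ ≤ C) :
    IsClosed {g | CauchySeq fun m => ⟪x m, g⟫} :=
  isClosed_setOf_cauchySeq_of_lipschitzWith (K := C.toNNReal) fun m =>
    LipschitzWith.of_dist_le_mul fun g h => by
      rw [Real.dist_eq, ← inner_sub_right, dist_eq_norm]
      exact (abs_real_inner_le_norm _ _).trans
        (mul_le_mul_of_nonneg_right ((hx m).trans (Real.le_coe_toNNReal C)) (norm_nonneg _))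

variable [NormedAddCommGroup E] [InnerProductSpace ℝ E]

theorem exists_tendsto_inner_of_cauchySeq [CompleteSpace E] {x : ℕ → E}
    (hx : ∀ g, CauchySeq fun m => ⟪x m, g⟫) :
    ∃ y, ∀ g, Tendsto (fun m => ⟪x m, g⟫) atTop (𝓝 ⟪y, g⟫) := by
  choose l hl using fun g => cauchySeq_tendsto_of_complete (hx g)
  let T : StrongDual ℝ E := continuousLinearMapOfTendsto (fun m => innerSL ℝ (x m))
    (tendsto_pi_nhds.2 hl)
  refine ⟨(InnerProductSpace.toDual ℝ E).symm T, fun g => ?_⟩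
  rw [InnerProductSpace.toDual_symm_apply]
  exact hl g

theorem norm_le_of_tendsto_inner {x : ℕ → E} {y : E} {C : ℝ}
    (hy : ∀ g, Tendsto (fun m => ⟪x m, g⟫) atTop (𝓝 ⟪y, g⟫)) (hx : ∀ m, ‖x m‖ ≤ C) :
    ‖y‖ ≤ C := by
  have hy2 : ‖y‖ ^ 2 ≤ C * ‖y‖ := by
    rw [← real_inner_self_eq_norm_sq]
    exact le_of_tendsto' (hy y) fun m =>
      (real_inner_le_norm _ _).trans (mul_le_mul_of_nonneg_right (hx m) (norm_nonneg _))
  nlinarith [norm_nonneg y, (norm_nonneg (x 0)).trans (hx 0)]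

end InnerProductSpace

namespace MeasureTheory.Lp

variable {α : Type*} [MeasurableSpace α] {μ : Measure α}

theorem inner_le_inner_of_le {u v h : Lp ℝ 2 μ} (huv : u ≤ v) (hh : 0 ≤ h) :
    ⟪u, h⟫ ≤ ⟪v, h⟫ := by
  simp only [L2.inner_def, Real.inner_apply]
  refine integral_mono_ae ?_ ?_ ?_
  · simpa only [Real.inner_apply] using L2.integrable_inner (𝕜 := ℝ) u h
  · simpa only [Real.inner_apply] using L2.integrable_inner (𝕜 := ℝ) v h
  · filter_upwards [(coeFn_le u v).2 huv, (coeFn_nonneg h).2 hh] with a hva hha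
    exact mul_le_mul_of_nonneg_right hva hha

theorem inner_negPart_self (w : Lp ℝ 2 μ) : ⟪w, w⁻⟫ = -‖w⁻‖ ^ 2 := by
  rw [← real_inner_self_eq_norm_sq, negPart_def, L2.inner_def, L2.inner_def, ← integral_neg]
  refine integral_congr_ae ?_
  filter_upwards [coeFn_sup (-w) 0, coeFn_neg w, coeFn_zero ℝ 2 μ] with a hsup hneg hzero
  simp only [Real.inner_apply, hsup, Pi.sup_apply, hneg, hzero, Pi.neg_apply, Pi.zero_apply]
  rcases le_total (w a) 0 with hw | hw
  · rw [sup_of_le_left (by linarith)]; ring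
  · rw [sup_of_le_right (by linarith)]; ring

theorem le_of_forall_inner_le {u v : Lp ℝ 2 μ} (h : ∀ g, 0 ≤ g → ⟪u, g⟫ ≤ ⟪v, g⟫) : u ≤ v := by
  have hneg : ⟪v - u, (v - u)⁻⟫ = 0 := by
    refine le_antisymm ?_ ?_
    · rw [inner_negPart_self]; exact neg_nonpos.2 (sq_nonneg _)
    · rw [inner_sub_left, sub_nonneg]; exact h _ (negPart_nonneg _)
  rw [inner_negPart_self, neg_eq_zero, sq_eq_zero_iff, norm_eq_zero, negPart_eq_zero] at hneg
  exact sub_nonneg.1 hneg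

theorem le_of_tendsto_inner {x y : ℕ → Lp ℝ 2 μ} {u v : Lp ℝ 2 μ}
    (hu : ∀ g, Tendsto (fun m => ⟪x m, g⟫) atTop (𝓝 ⟪u, g⟫))
    (hv : ∀ g, Tendsto (fun m => ⟪y m, g⟫) atTop (𝓝 ⟪v, g⟫)) (hxy : ∀ m, x m ≤ y m) : u ≤ v :=
  le_of_forall_inner_le fun g hg =>
    le_of_tendsto_of_tendsto' (hu g) (hv g) fun m => inner_le_inner_of_le (hxy m) hg

theorem cauchySeq_inner_of_closure_nonneg {x : ℕ → Lp ℝ 2 μ} {C : ℝ} (hx : ∀ m, ‖x m‖ ≤ C)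
    {c : Set (Lp ℝ 2 μ)} (hc : {g | 0 ≤ g} ⊆ closure c)
    (hxc : ∀ h ∈ c, CauchySeq fun m => ⟪x m, h⟫) (g : Lp ℝ 2 μ) :
    CauchySeq fun m => ⟪x m, g⟫ := by
  have hnonneg : ∀ h, 0 ≤ h → CauchySeq fun m => ⟪x m, h⟫ := fun h hh =>
    closure_minimal hxc (isClosed_setOf_cauchySeq_inner hx) (hc hh)
  rw [← posPart_sub_negPart g]
  simp_rw [inner_sub_right, sub_eq_add_neg]
  exact (hnonneg _ (posPart_nonneg g)).add (hnonneg _ (negPart_nonneg g)).neg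

end MeasureTheory.Lp

theorem exists_subseq_tendsto_inner_of_monotone {α : Type*} [MeasurableSpace α]
    {μ : Measure α} [TopologicalSpace.SeparableSpace (Lp ℝ 2 μ)] (φ : ℕ → ℝ → Lp ℝ 2 μ)
    (hφ : ∀ m, Monotone (φ m)) {C : ℝ} (hC : ∀ m t, ‖φ m t‖ ≤ C) :
    ∃ σ : ℕ → ℕ, StrictMono σ ∧ ∃ ψ : ℝ → Lp ℝ 2 μ,
      (∀ t g, Tendsto (fun m => ⟪φ (σ m) t, g⟫) atTop (𝓝 ⟪ψ t, g⟫)) ∧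
      (∀ t, ‖ψ t‖ ≤ C) ∧ Monotone ψ := by
  obtain ⟨c, hc_nonneg, hc_countable, hc_dense⟩ := (TopologicalSpace.IsSeparable.of_separableSpace
    {g : Lp ℝ 2 μ | 0 ≤ g}).exists_countable_dense_subset
  have := hc_countable.to_subtype
  obtain ⟨σ, hσ, hconv⟩ := exists_subseq_tendsto_of_monotone (fun m (h : c) t => ⟪φ m t, h⟫)
    (fun m h _ _ hst => Lp.inner_le_inner_of_le (hφ m hst) (hc_nonneg h.2))
    (fun h => C * ‖(h : Lp ℝ 2 μ)‖)
    (fun m h t => (abs_real_inner_le_norm _ _).trans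
      (mul_le_mul_of_nonneg_right (hC m t) (norm_nonneg _)))
  have hcauchy : ∀ t g, CauchySeq fun m => ⟪φ (σ m) t, g⟫ := fun t =>
    Lp.cauchySeq_inner_of_closure_nonneg (fun m => hC (σ m) t) hc_dense fun h hh =>
      let ⟨_, hl⟩ := hconv ⟨h, hh⟩ t; hl.cauchySeq
  choose ψ hψ using fun t => exists_tendsto_inner_of_cauchySeq (hcauchy t)
  exact ⟨σ, hσ, ψ, hψ, fun t => norm_le_of_tendsto_inner (hψ t) fun m => hC (σ m) t,
    fun s t hst => Lp.le_of_tendsto_inner (hψ s) (hψ t) fun m => hφ (σ m) hst⟩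

theorem helly_selection_L2_general
    (d : ℕ) (Ω : Set (EuclideanSpace ℝ (Fin d)))
    (a b C : ℝ) (hab : a ≤ b)
    (φ : ℕ → ℝ → Lp ℝ 2 (volume.restrict Ω))
    (hmono : ∀ m, ∀ s ∈ Set.Icc a b, ∀ t ∈ Set.Icc a b, s ≤ t → φ m s ≤ φ m t)
    (hbdd : ∀ m, ∀ t ∈ Set.Icc a b, ‖φ m t‖ ≤ C) :
    ∃ σ : ℕ → ℕ, StrictMono σ ∧
      ∃ ψ : ℝ → Lp ℝ 2 (volume.restrict Ω),
        (∀ t ∈ Set.Icc a b, ∀ g : Lp ℝ 2 (volume.restrict Ω),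
          Tendsto (fun m => ⟪φ (σ m) t, g⟫) atTop (nhds ⟪ψ t, g⟫)) ∧
        (∀ t ∈ Set.Icc a b, ‖ψ t‖ ≤ C) ∧
        (∀ s ∈ Set.Icc a b, ∀ t ∈ Set.Icc a b, s ≤ t → ψ s ≤ ψ t) := by
  have : Fact ((2 : ℝ≥0∞) ≠ ⊤) := ⟨ENNReal.ofNat_ne_top⟩
  obtain ⟨σ, hσ, ψ, hψ, hψC, hψmono⟩ := exists_subseq_tendsto_inner_of_monotone
    (fun m t => φ m (projIcc a b hab t))
    (fun m _ _ hst =>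
      hmono m _ (projIcc a b hab _).2 _ (projIcc a b hab _).2 (monotone_projIcc hab hst))
    (fun m t => hbdd m _ (projIcc a b hab t).2)
  refine ⟨σ, hσ, ψ, fun t ht g => ?_, fun t _ => hψC t, fun s _ t _ hst => hψmono hst⟩
  simpa only [projIcc_of_mem hab ht] using hψ t g

/-- Helly-type selection theorem in `L²(Ω)` (Lemma 5.3 of the paper):
from a sequence of maps `φ_m : [a,b] → L²(Ω)` that are nondecreasing in time
with respect to the a.e. order and uniformly norm-bounded by `C`, one can
extract a subsequence converging weakly in `L²(Ω)` at every time `t ∈ [a,b]`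
to a limit function `φ` which is again nondecreasing and bounded by `C`. -/
theorem helly_selection_L2
    (d : ℕ) (hd : 1 ≤ d) (Ω : Set (EuclideanSpace ℝ (Fin d)))
    (hΩopen : IsOpen Ω) (hΩbounded : Bornology.IsBounded Ω)
    (a b C : ℝ) (hab : a ≤ b) (hC : 0 < C)
    (φ : ℕ → ℝ → Lp ℝ 2 (volume.restrict Ω))
    (hmono : ∀ m, ∀ s ∈ Set.Icc a b, ∀ t ∈ Set.Icc a b, s ≤ t → φ m s ≤ φ m t)
    (hbdd : ∀ m, ∀ t ∈ Set.Icc a b, ‖φ m t‖ ≤ C) :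
    ∃ σ : ℕ → ℕ, StrictMono σ ∧
      ∃ ψ : ℝ → Lp ℝ 2 (volume.restrict Ω),
        (∀ t ∈ Set.Icc a b, ∀ g : Lp ℝ 2 (volume.restrict Ω),
          Tendsto (fun m => ⟪φ (σ m) t, g⟫) atTop (nhds ⟪ψ t, g⟫)) ∧
        (∀ t ∈ Set.Icc a b, ‖ψ t‖ ≤ C) ∧
        (∀ s ∈ Set.Icc a b, ∀ t ∈ Set.Icc a b, s ≤ t → ψ s ≤ ψ t) :=
  helly_selection_L2_general d Ω a b C hab φ hmono hbdd
end

section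
/- Let T > 0, let 0 < δ < 1, let ε > 0, and let Ψ : ℝ → ℝ be a continuously differentiable function with 0 ≤ Ψ ≤ 1, Ψ(r) = 0 for |r| ≤ δ, and Ψ(r) = 1 for |r| ≥ 1. Let s : ℝ → ℝ be continuously differentiable with s(0) = 0, and for t ∈ [0,T] set Γ_t := {(σ,0) ∈ ℝ² : σ ≤ s(t)}. Define Φ(y) := Ψ(dist(y,Γ_0)) for y ∈ ℝ² and v_ε(t,x) := Ψ(dist(x,Γ_t)/ε) for t ∈ [0,T], x ∈ ℝ². Then: (i) Φ is continuously differentiable on ℝ²; (ii) for every t ∈ [0,T] and x ∈ ℝ², the map τ ↦ v_ε(τ,x) is differentiable at t with derivative ∂_t v_ε(t,x) = −(s'(t)/ε) ∂₁Φ((x − (s(t),0))/ε), where ∂₁Φ denotes the partial derivative of Φ with respect to the first coordinate; and (iii) for every t ∈ [0,T], ∫_{ℝ²} |∂_t v_ε(t,x)|² dx = s'(t)² ∫_{ℝ²} |∂₁Φ(y)|² dy. -/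
/-!
The distance from `y` to the half-line `{p | p 1 = 0 ∧ p 0 ≤ c}` is
`√(max (y 0 - c) 0 ^ 2 + y 1 ^ 2)`. The radicand is `C¹` in `y`, and `Ψ ∘ √` is `C¹` because `Ψ`
vanishes near `0`, so `Φ` is `C¹`. The same formula shows that `v τ` is the rescaled translate
`x ↦ Φ (ε⁻¹ • (x - (s τ, 0)))` of `Φ`: the chain rule gives `∂_t v`, and translating and dilating
the integral produces a Jacobian `ε²` that cancels the factor `ε⁻²` of `(∂_t v)²`.
-/

open MeasureTheory Topology

local notation "ℝ²" => EuclideanSpace ℝ (Fin 2)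

theorem EuclideanSpace.dist_fin_two_eq (y p : ℝ²) :
    dist y p = √((y 0 - p 0) ^ 2 + (y 1 - p 1) ^ 2) := by
  rw [EuclideanSpace.dist_eq, Fin.sum_univ_two, Real.dist_eq, Real.dist_eq, sq_abs, sq_abs]

theorem EuclideanSpace.single_eq_smul_single_one {ι : Type*} [DecidableEq ι] (i : ι) (r : ℝ) :
    EuclideanSpace.single i r = r • EuclideanSpace.single i 1 := by
  ext j
  simp [PiLp.single_apply]

theorem hasDerivAt_max_zero_sq (x : ℝ) :
    HasDerivAt (fun x : ℝ => max x 0 ^ 2) (2 * max x 0) x := by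
  refine hasDerivAt_of_hasDerivAt_of_ne' (f := fun x : ℝ => max x 0 ^ 2) (x := 0)
    (g := fun x => 2 * max x 0) (fun y hy => ?_)
    ((continuous_id.max continuous_const).pow 2).continuousAt
    (continuous_const.mul (continuous_id.max continuous_const)).continuousAt x
  rcases hy.lt_or_gt with hy | hy
  · have : (fun x : ℝ => max x 0 ^ 2) =ᶠ[𝓝 y] fun _ => 0 := by
      filter_upwards [Iio_mem_nhds hy] with z hz
      simp [max_eq_right (Set.mem_Iio.1 hz).le]
    simpa [max_eq_right hy.le] using (hasDerivAt_const y (0 : ℝ)).congr_of_eventuallyEq this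
  · have : (fun x : ℝ => max x 0 ^ 2) =ᶠ[𝓝 y] fun z => z ^ 2 := by
      filter_upwards [Ioi_mem_nhds hy] with z hz
      simp [max_eq_left (Set.mem_Ioi.1 hz).le]
    simpa [max_eq_left hy.le, mul_comm] using (hasDerivAt_pow 2 y).congr_of_eventuallyEq this

theorem contDiff_max_zero_sq : ContDiff ℝ 1 (fun x : ℝ => max x 0 ^ 2) := by
  rw [contDiff_one_iff_deriv]
  refine ⟨fun x => (hasDerivAt_max_zero_sq x).differentiableAt, ?_⟩
  rw [funext fun x => (hasDerivAt_max_zero_sq x).deriv]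
  fun_prop

theorem ContDiff.comp_sqrt_of_eqOn_zero {n : WithTop ℕ∞} {f : ℝ → ℝ} (hf : ContDiff ℝ n f)
    {δ : ℝ} (hδ : 0 < δ) (hf0 : Set.EqOn f 0 (Set.Ico 0 δ)) : ContDiff ℝ n (f ∘ Real.sqrt) := by
  refine contDiff_iff_contDiffAt.2 fun x => ?_
  rcases lt_or_ge 0 x with hx | hx
  · exact hf.contDiffAt.comp x (Real.contDiffAt_sqrt hx.ne')
  · have : f ∘ Real.sqrt =ᶠ[𝓝 x] fun _ => 0 := by
      filter_upwards [Iio_mem_nhds (hx.trans_lt (pow_pos hδ 2))] with r hr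
      exact hf0 ⟨Real.sqrt_nonneg r, (Real.sqrt_lt' hδ).2 hr⟩
    exact contDiffAt_const.congr_of_eventuallyEq this

theorem hasDerivAt_comp_smul_sub_smul {E F : Type*} [NormedAddCommGroup E] [NormedSpace ℝ E]
    [NormedAddCommGroup F] [NormedSpace ℝ F] {Φ : E → F} {s : ℝ → ℝ} {s' t : ℝ} (c : ℝ) (x e : E)
    (hΦ : DifferentiableAt ℝ Φ (c • (x - s t • e))) (hs : HasDerivAt s s' t) :
    HasDerivAt (fun τ => Φ (c • (x - s τ • e)))
      (-(s' * c) • fderiv ℝ Φ (c • (x - s t • e)) e) t := by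
  refine (hΦ.hasFDerivAt.comp_hasDerivAt t
    (((hs.smul_const e).const_sub x).const_smul c)).congr_deriv ?_
  simp [smul_smul, mul_comm c]

theorem integral_comp_inv_smul_sub {E F : Type*} [NormedAddCommGroup E] [NormedSpace ℝ E]
    [MeasurableSpace E] [BorelSpace E] [FiniteDimensional ℝ E] [NormedAddCommGroup F]
    [NormedSpace ℝ F] (μ : Measure E) [μ.IsAddHaarMeasure] (f : E → F) (a : E) {ε : ℝ}
    (hε : 0 ≤ ε) :
    ∫ x, f (ε⁻¹ • (x - a)) ∂μ = ε ^ Module.finrank ℝ E • ∫ x, f x ∂μ := by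
  rw [integral_sub_right_eq_self (fun x => f (ε⁻¹ • x)) a,
    Measure.integral_comp_inv_smul_of_nonneg μ f hε]

def halfLine (c : ℝ) : Set ℝ² := {p | p 1 = 0 ∧ p 0 ≤ c}

theorem infDist_halfLine (c : ℝ) (y : ℝ²) :
    Metric.infDist y (halfLine c) = √(max (y 0 - c) 0 ^ 2 + y 1 ^ 2) := by
  set nearest : ℝ² := EuclideanSpace.single 0 (min (y 0) c)
  have hnearest : nearest ∈ halfLine c := by simp [nearest, halfLine]
  refine le_antisymm ((Metric.infDist_le_dist_of_mem hnearest).trans_eq ?_)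
    ((Metric.le_infDist ⟨nearest, hnearest⟩).2 fun p hp => ?_)
  · rw [EuclideanSpace.dist_fin_two_eq]
    rcases le_total (y 0) c with h | h <;> simp [nearest, h]
  · rw [EuclideanSpace.dist_fin_two_eq, hp.1, sub_zero]
    refine Real.sqrt_le_sqrt (add_le_add_left ?_ _)
    rcases le_total (y 0) c with h | h
    · simp [h, sq_nonneg]
    · rw [max_eq_left (sub_nonneg.2 h)]; nlinarith [hp.2]

theorem infDist_halfLine_div (c : ℝ) {ε : ℝ} (hε : 0 < ε) (x : ℝ²) :
    Metric.infDist x (halfLine c) / ε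
      = Metric.infDist (ε⁻¹ • (x - EuclideanSpace.single 0 c)) (halfLine 0) := by
  have hmax : max (ε⁻¹ * (x 0 - c)) 0 = ε⁻¹ * max (x 0 - c) 0 := by
    rw [mul_max_of_nonneg _ _ (inv_nonneg.2 hε.le), mul_zero]
  simp only [infDist_halfLine, PiLp.smul_apply, PiLp.sub_apply, PiLp.single_apply, smul_eq_mul]
  simp [hmax, mul_pow, ← mul_add, Real.sqrt_sq, hε.le, div_eq_inv_mul]

theorem contDiff_comp_infDist_halfLine {Ψ : ℝ → ℝ} (hΨ : ContDiff ℝ 1 Ψ) {δ : ℝ} (hδ : 0 < δ)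
    (hΨ0 : Set.EqOn Ψ 0 (Set.Ico 0 δ)) :
    ContDiff ℝ 1 fun y => Ψ (Metric.infDist y (halfLine 0)) := by
  have hsq : ContDiff ℝ 1 fun y : ℝ² => max (y 0) 0 ^ 2 + y 1 ^ 2 :=
    (contDiff_max_zero_sq.comp (EuclideanSpace.proj (𝕜 := ℝ) (0 : Fin 2)).contDiff).add
      ((EuclideanSpace.proj (𝕜 := ℝ) (1 : Fin 2)).contDiff.pow 2)
  simp only [infDist_halfLine, sub_zero]
  exact (hΨ.comp_sqrt_of_eqOn_zero hδ hΨ0).comp hsq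

theorem phase_field_dissipation_of_moving_crack_general
    (T : ℝ) (δ : ℝ) (hδ0 : 0 < δ)
    (ε : ℝ) (hε : 0 < ε)
    (Ψ : ℝ → ℝ) (hΨ : ContDiff ℝ 1 Ψ)
    (hΨ0 : ∀ r, |r| ≤ δ → Ψ r = 0)
    (s : ℝ → ℝ) (hs : ContDiff ℝ 1 s) (hs0 : s 0 = 0)
    (Γ : ℝ → Set (EuclideanSpace ℝ (Fin 2)))
    (hΓ : ∀ t, Γ t = {p : EuclideanSpace ℝ (Fin 2) | p 1 = 0 ∧ p 0 ≤ s t})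
    (Φ : EuclideanSpace ℝ (Fin 2) → ℝ)
    (hΦ : ∀ y, Φ y = Ψ (Metric.infDist y (Γ 0)))
    (v : ℝ → EuclideanSpace ℝ (Fin 2) → ℝ)
    (hv : ∀ t x, v t x = Ψ (Metric.infDist x (Γ t) / ε)) :
    ContDiff ℝ 1 Φ ∧
    (∀ t ∈ Set.Icc (0:ℝ) T, ∀ x : EuclideanSpace ℝ (Fin 2),
      HasDerivAt (fun τ => v τ x)
        (-(deriv s t / ε) *
          fderiv ℝ Φ (ε⁻¹ • (x - EuclideanSpace.single (0 : Fin 2) (s t)))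
            (EuclideanSpace.single (0 : Fin 2) 1)) t) ∧
    (∀ t ∈ Set.Icc (0:ℝ) T,
      ∫ x : EuclideanSpace ℝ (Fin 2), (deriv (fun τ => v τ x) t) ^ 2
        = (deriv s t) ^ 2 *
          ∫ y : EuclideanSpace ℝ (Fin 2),
            (fderiv ℝ Φ y (EuclideanSpace.single (0 : Fin 2) 1)) ^ 2) := by
  have hΦ' : Φ = fun y => Ψ (Metric.infDist y (halfLine 0)) := by
    ext y; rw [hΦ, hΓ, hs0]; rfl
  have hΦC1 : ContDiff ℝ 1 Φ := hΦ' ▸ contDiff_comp_infDist_halfLine hΨ hδ0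
    fun r hr => hΨ0 r ((abs_of_nonneg hr.1).trans_lt hr.2).le
  set e := EuclideanSpace.single (0 : Fin 2) (1 : ℝ)
  have hv' : ∀ x, (fun τ => v τ x) = fun τ => Φ (ε⁻¹ • (x - s τ • e)) := fun x => by
    ext τ
    rw [hv, hΓ, ← EuclideanSpace.single_eq_smul_single_one, hΦ']
    exact congrArg Ψ (infDist_halfLine_div (s τ) hε x)
  have hderiv : ∀ t x, HasDerivAt (fun τ => v τ x)
      (-(deriv s t / ε) * fderiv ℝ Φ (ε⁻¹ • (x - s t • e)) e) t := fun t x => by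
    rw [hv', div_eq_mul_inv, ← smul_eq_mul]
    exact hasDerivAt_comp_smul_sub_smul _ _ _ (hΦC1.differentiable one_ne_zero _)
      (hs.differentiable one_ne_zero t).hasDerivAt
  simp only [EuclideanSpace.single_eq_smul_single_one _ (s _)]
  refine ⟨hΦC1, fun t _ x => hderiv t x, fun t _ => ?_⟩
  calc ∫ x, deriv (fun τ => v τ x) t ^ 2
      = ∫ x, (deriv s t / ε) ^ 2 * fderiv ℝ Φ (ε⁻¹ • (x - s t • e)) e ^ 2 := by
        congr! 2 with x; rw [(hderiv t x).deriv]; ring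
    _ = (deriv s t / ε) ^ 2 * (ε ^ 2 * ∫ y, fderiv ℝ Φ y e ^ 2) := by
        rw [integral_const_mul,
          integral_comp_inv_smul_sub volume (fun y => fderiv ℝ Φ y e ^ 2) _ hε.le,
          finrank_euclideanSpace_fin, smul_eq_mul]
    _ = deriv s t ^ 2 * ∫ y, fderiv ℝ Φ y e ^ 2 := by
        field_simp

/-- The computation of Remark 2.5 of the paper: for a rectilinear crack
`Γ_t = {(σ,0) : σ ≤ s(t)}` moving along the `x₁`-axis and the optimal
phase-field profile `v_ε(t,x) = Ψ(dist(x,Γ_t)/ε)` with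
`Φ(y) = Ψ(dist(y,Γ_0))`, one has: (i) `Φ` is `C¹`; (ii) the time derivative
of `v_ε` is `∂_t v_ε(t,x) = −(s'(t)/ε) ∂₁Φ((x − (s(t),0))/ε)`; and (iii)
`∫_{ℝ²} |∂_t v_ε(t,x)|² dx = s'(t)² ∫_{ℝ²} |∂₁Φ(y)|² dy`. -/
theorem phase_field_dissipation_of_moving_crack
    (T : ℝ) (hT : 0 < T) (δ : ℝ) (hδ0 : 0 < δ) (hδ1 : δ < 1)
    (ε : ℝ) (hε : 0 < ε)
    (Ψ : ℝ → ℝ) (hΨ : ContDiff ℝ 1 Ψ)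
    (hΨ01 : ∀ r, 0 ≤ Ψ r ∧ Ψ r ≤ 1)
    (hΨ0 : ∀ r, |r| ≤ δ → Ψ r = 0)
    (hΨ1 : ∀ r, 1 ≤ |r| → Ψ r = 1)
    (s : ℝ → ℝ) (hs : ContDiff ℝ 1 s) (hs0 : s 0 = 0)
    (Γ : ℝ → Set (EuclideanSpace ℝ (Fin 2)))
    (hΓ : ∀ t, Γ t = {p : EuclideanSpace ℝ (Fin 2) | p 1 = 0 ∧ p 0 ≤ s t})
    (Φ : EuclideanSpace ℝ (Fin 2) → ℝ)
    (hΦ : ∀ y, Φ y = Ψ (Metric.infDist y (Γ 0)))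
    (v : ℝ → EuclideanSpace ℝ (Fin 2) → ℝ)
    (hv : ∀ t x, v t x = Ψ (Metric.infDist x (Γ t) / ε)) :
    ContDiff ℝ 1 Φ ∧
    (∀ t ∈ Set.Icc (0:ℝ) T, ∀ x : EuclideanSpace ℝ (Fin 2),
      HasDerivAt (fun τ => v τ x)
        (-(deriv s t / ε) *
          fderiv ℝ Φ (ε⁻¹ • (x - EuclideanSpace.single (0 : Fin 2) (s t)))
            (EuclideanSpace.single (0 : Fin 2) 1)) t) ∧
    (∀ t ∈ Set.Icc (0:ℝ) T,
      ∫ x : EuclideanSpace ℝ (Fin 2), (deriv (fun τ => v τ x) t) ^ 2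
        = (deriv s t) ^ 2 *
          ∫ y : EuclideanSpace ℝ (Fin 2),
            (fderiv ℝ Φ y (EuclideanSpace.single (0 : Fin 2) 1)) ^ 2) :=
  phase_field_dissipation_of_moving_crack_general T δ hδ0 ε hε Ψ hΨ hΨ0 s hs hs0 Γ hΓ Φ hΦ v hv
end
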